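/- Let d_1, d_2 be even numbers and d = d_1+d_2. Let λ_1, λ_1' be special symplectic partitions of d_1 and λ_2, λ_2' special orthogonal partitions of d_2, and suppose λ_1 ≤ λ_1' and λ_2 ≤ λ_2' in dominance order. Then W(λ_1,λ_2) ≤ W(λ_1',λ_2') in dominance order, where both Waldspurger sequences are formed with the type C data. -/

import Mathlib

/-- `f` is a partition of `d`: weakly decreasing, finitely many nonzero terms, total sum `d`.
    Indexing is 0-based: `f j` is the `(j+1)`-st part. -/
def IsPartitionOf (f : ℕ → ℕ) (d : ℕ) : Prop :=
  Antitone f ∧ ∃ N, (∀ j, N ≤ j → f j = 0) ∧ ∑ j ∈ Finset.range N, f j = d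

/-- Transpose of a partition (0-based): `ptrans f k` = #{j : f j ≥ k+1}, i.e. `(f^t)_{k+1}`. -/
noncomputable def ptrans (f : ℕ → ℕ) : ℕ → ℕ := fun k => Nat.card {j : ℕ // k + 1 ≤ f j}

/-- Multiplicity of the part `k` in `f` (meaningful for `k > 0`). -/
noncomputable def pmult (f : ℕ → ℕ) (k : ℕ) : ℕ := Nat.card {j : ℕ // f j = k}

/-- Orthogonal: every even positive part occurs with even multiplicity. -/
def IsOrthogonal (f : ℕ → ℕ) : Prop := ∀ k, 0 < k → Even k → Even (pmult f k)

/-- Symplectic: every odd positive part occurs with even multiplicity. -/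
def IsSymplectic (f : ℕ → ℕ) : Prop := ∀ k, 0 < k → Odd k → Even (pmult f k)

/-- Dominance order for ℕ-valued sequences. -/
def NDomLE (f g : ℕ → ℕ) : Prop :=
  ∀ N, ∑ j ∈ Finset.range N, f j ≤ ∑ j ∈ Finset.range N, g j

/-- Dominance order for ℤ-valued sequences. -/
def DomLE (f g : ℕ → ℤ) : Prop :=
  ∀ N, ∑ j ∈ Finset.range N, f j ≤ ∑ j ∈ Finset.range N, g j

/-- `ν` is the `P`-collapse of `μ` (both of total size `m`): `ν` is a partition of `m`
    satisfying `P`, `ν ≤ μ`, and every partition `σ` of `m` satisfying `P` with `σ ≤ μ`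
    satisfies `σ ≤ ν`. -/
def IsCollapse (P : (ℕ → ℕ) → Prop) (m : ℕ) (μ ν : ℕ → ℕ) : Prop :=
  IsPartitionOf ν m ∧ P ν ∧ NDomLE ν μ ∧
    ∀ σ, IsPartitionOf σ m → P σ → NDomLE σ μ → NDomLE σ ν

/-- B-collapse (largest orthogonal partition below `μ`, `m` odd). -/
def IsBCollapse : ℕ → (ℕ → ℕ) → (ℕ → ℕ) → Prop := IsCollapse IsOrthogonal
/-- C-collapse (largest symplectic partition below `μ`, `m` even). -/
def IsCCollapse : ℕ → (ℕ → ℕ) → (ℕ → ℕ) → Prop := IsCollapse IsSymplectic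
/-- D-collapse (largest orthogonal partition below `μ`, `m` even). -/
def IsDCollapse : ℕ → (ℕ → ℕ) → (ℕ → ℕ) → Prop := IsCollapse IsOrthogonal

/-- `μ^−` : decrease the smallest nonzero part by 1. -/
def minusOne (f : ℕ → ℕ) : ℕ → ℕ :=
  fun j => if 0 < f j ∧ f (j+1) = 0 then f j - 1 else f j

/-- `μ^+` : increase the largest part by 1. -/
def plusOne (f : ℕ → ℕ) : ℕ → ℕ := fun j => if j = 0 then f 0 + 1 else f j

/-- `u = f ∪ g` : `u` is weakly decreasing, finitely supported, and every positive
    part occurs in `u` with multiplicity the sum of its multiplicities in `f` and `g`. -/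
def IsUnionOf (u f g : ℕ → ℕ) : Prop :=
  Antitone u ∧ (∃ N, ∀ j, N ≤ j → u j = 0) ∧
    ∀ k, 0 < k → pmult u k = pmult f k + pmult g k

/-- The sequence ξ attached to `(f, g, ε₁, ε₂, d)`.  Index `j` here corresponds to the
    1-based index `j+1` of the paper. -/
def xiSeq (f g : ℕ → ℕ) (e1 e2 d : ℕ) : ℕ → ℤ := fun j =>
  if (j + 1) % 2 = (d + 1) % 2 ∧ f j % 2 = e1 ∧ g j % 2 = e2 ∧
      (j = 0 ∨ f j + g j < f (j - 1) + g (j - 1)) then 1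
  else if (j + 1) % 2 = d % 2 ∧ f j % 2 = e1 ∧ g j % 2 = e2 ∧
      f (j + 1) + g (j + 1) < f j + g j then -1
  else 0

/-- The Waldspurger sequence `W(f,g) = f + g + ξ` (ℤ-valued a priori). -/
def wald (f g : ℕ → ℕ) (e1 e2 d : ℕ) : ℕ → ℤ :=
  fun j => (f j : ℤ) + (g j : ℤ) + xiSeq f g e1 e2 d j


/-!
If `λᵗ` is symplectic then the multiplicity `λ_{2i+1} - λ_{2i+2}` of the odd part `2i+1` of `λᵗ`
is even, so the parts of `λ` come in pairs of equal parity. For even `d` the `+1` and `-1`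
entries of `ξ` then cancel pairwise, and the partial sums of `ξ` telescope to a closed form
with values in `{0, 1}`. A strict dominance inequality between the partial sums of
`λ₁ + λ₂` and `λ₁' + λ₂'` thus survives adding `ξ`; at an equality of partial sums both
dominances are equalities, and the closed forms can be compared directly.
-/

open Finset

theorem IsLowerSet.mem_iff_lt_ncard {s : Set ℕ} (hs : IsLowerSet s) (hfin : s.Finite) (m : ℕ) :
    m ∈ s ↔ m < s.ncard := by
  obtain hu | ⟨a, rfl⟩ := hs.eq_univ_or_Iio
  · exact absurd (hu ▸ hfin) Set.infinite_univ
  · simp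

section Transpose

variable {f : ℕ → ℕ}

lemma lt_ptrans_iff (hf : Antitone f) {N : ℕ} (hN : ∀ j, N ≤ j → f j = 0) (i m : ℕ) :
    m < ptrans f i ↔ i + 1 ≤ f m := by
  have hlow : IsLowerSet {j | i + 1 ≤ f j} := fun _ _ hba ha => le_trans ha (hf hba)
  have hfin : {j | i + 1 ≤ f j}.Finite := (Set.finite_Iio N).subset fun j hj => by
    by_contra hjN
    have := hN j (not_lt.mp hjN)
    simp_all
  have hcard : ptrans f i = {j | i + 1 ≤ f j}.ncard := Nat.card_coe_set_eq _
  rw [hcard]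
  exact (hlow.mem_iff_lt_ncard hfin m).symm

lemma pmult_ptrans (hf : Antitone f) {N : ℕ} (hN : ∀ j, N ≤ j → f j = 0) {k : ℕ} (hk : 0 < k) :
    pmult (ptrans f) k = f (k - 1) - f k := by
  have hset : {i | ptrans f i = k} = Set.Ico (f k) (f (k - 1)) := by
    ext i
    have := lt_ptrans_iff hf hN i (k - 1)
    have := lt_ptrans_iff hf hN i k
    simp only [Set.mem_ofPred_eq, Set.mem_Ico]
    omega
  have hcard : pmult (ptrans f) k = {i | ptrans f i = k}.ncard := Nat.card_coe_set_eq _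
  rw [hcard, hset, Set.ncard_Ico_nat]

end Transpose

def ParityPaired (f : ℕ → ℕ) : Prop := ∀ i, f (2 * i) % 2 = f (2 * i + 1) % 2

lemma IsPartitionOf.parityPaired {f : ℕ → ℕ} {d : ℕ} (hp : IsPartitionOf f d)
    (hs : IsSymplectic (ptrans f)) : ParityPaired f := by
  intro i
  obtain ⟨hf, N, hN, -⟩ := hp
  have hmult := hs (2 * i + 1) (by omega) ⟨i, rfl⟩
  rw [pmult_ptrans hf hN (by omega), Nat.add_sub_cancel] at hmult
  have : f (2 * i + 1) ≤ f (2 * i) := hf (by omega)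
  obtain ⟨c, hc⟩ := hmult
  omega

lemma ParityPaired.sum_range_two_mul_mod_two {f : ℕ → ℕ} (hf : ParityPaired f) (m : ℕ) :
    (∑ j ∈ range (2 * m), f j) % 2 = 0 := by
  induction m with
  | zero => simp
  | succ m ih =>
    rw [Nat.mul_succ, sum_range_succ, sum_range_succ]
    have := hf m
    omega

lemma ParityPaired.mod_two_eq_of_sum_range_eq {f f' : ℕ → ℕ} (hf : ParityPaired f)
    (hf' : ParityPaired f') {m : ℕ}
    (heq : ∑ j ∈ range (2 * m + 1), f j = ∑ j ∈ range (2 * m + 1), f' j) :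
    f (2 * m) % 2 = f' (2 * m) % 2 := by
  rw [sum_range_succ, sum_range_succ] at heq
  have := hf.sum_range_two_mul_mod_two m
  have := hf'.sum_range_two_mul_mod_two m
  omega

lemma eq_of_nDomLE_of_sum_range_eq {f f' : ℕ → ℕ} (hf' : Antitone f') (hle : NDomLE f f')
    {n : ℕ} (heq : ∑ j ∈ range (n + 1), f j = ∑ j ∈ range (n + 1), f' j)
    (hflat : f n = f (n + 1)) : f' n = f n ∧ f' (n + 1) = f (n + 1) := by
  have hprev := hle n
  have hnext := hle (n + 2)
  simp only [sum_range_succ] at heq hnext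
  have : f' (n + 1) ≤ f' n := hf' n.le_succ
  omega

/-- The closed form of `∑ j < N, xiSeq f g e1 e2 d j` for even `d` and parity-paired `f`, `g`. -/
def xiPartialSum (f g : ℕ → ℕ) (e1 e2 N : ℕ) : ℤ :=
  if N % 2 = 1 then (if f (N - 1) % 2 = e1 ∧ g (N - 1) % 2 = e2 then 1 else 0)
  else if N = 0 then 0
  else if f (N - 1) = f N ∧ f N % 2 = e1 ∧ g (N - 1) = g N ∧ g N % 2 = e2 then 1 else 0

lemma xiPartialSum_nonneg (f g : ℕ → ℕ) (e1 e2 N : ℕ) : 0 ≤ xiPartialSum f g e1 e2 N := by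
  unfold xiPartialSum; split_ifs <;> norm_num

lemma xiPartialSum_le_one (f g : ℕ → ℕ) (e1 e2 N : ℕ) : xiPartialSum f g e1 e2 N ≤ 1 := by
  unfold xiPartialSum; split_ifs <;> norm_num

section Telescoping

variable {f g : ℕ → ℕ} {e1 e2 d : ℕ}

lemma xiSeq_eq_xiPartialSum_sub (hf : Antitone f) (hg : Antitone g) (pf : ParityPaired f)
    (pg : ParityPaired g) (hd : Even d) (j : ℕ) :
    xiSeq f g e1 e2 d j = xiPartialSum f g e1 e2 (j + 1) - xiPartialSum f g e1 e2 j := by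
  have : f (j + 1) ≤ f j := hf j.le_succ
  have : g (j + 1) ≤ g j := hg j.le_succ
  have : f j ≤ f (j - 1) := hf (j.sub_le 1)
  have : g j ≤ g (j - 1) := hg (j.sub_le 1)
  have hd2 := Nat.even_iff.mp hd
  rcases Nat.even_or_odd' j with ⟨i, rfl | rfl⟩
  · simp only [xiSeq, xiPartialSum, Nat.add_sub_cancel]
    split_ifs <;> omega
  · have := pf i
    have := pg i
    simp only [xiSeq, xiPartialSum, Nat.add_sub_cancel, Nat.add_one_ne_zero, false_or,
      ↓reduceIte] at *
    split_ifs <;> omega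

lemma sum_range_wald (hf : Antitone f) (hg : Antitone g) (pf : ParityPaired f)
    (pg : ParityPaired g) (hd : Even d) (N : ℕ) :
    ∑ j ∈ range N, wald f g e1 e2 d j
      = ((∑ j ∈ range N, f j : ℕ) : ℤ) + ((∑ j ∈ range N, g j : ℕ) : ℤ)
        + xiPartialSum f g e1 e2 N := by
  have hxi : ∑ j ∈ range N, xiSeq f g e1 e2 d j = xiPartialSum f g e1 e2 N := by
    rw [sum_congr rfl fun j _ => xiSeq_eq_xiPartialSum_sub hf hg pf pg hd j, sum_range_sub]
    simp [xiPartialSum]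
  simp only [wald, sum_add_distrib, hxi, Nat.cast_sum]

end Telescoping

lemma xiPartialSum_le_of_sum_range_eq {f g f' g' : ℕ → ℕ} (hf' : Antitone f')
    (hg' : Antitone g') (pf : ParityPaired f) (pg : ParityPaired g) (pf' : ParityPaired f')
    (pg' : ParityPaired g') (hfle : NDomLE f f') (hgle : NDomLE g g') (e1 e2 : ℕ) {N : ℕ}
    (hfN : ∑ j ∈ range N, f j = ∑ j ∈ range N, f' j)
    (hgN : ∑ j ∈ range N, g j = ∑ j ∈ range N, g' j) :
    xiPartialSum f g e1 e2 N ≤ xiPartialSum f' g' e1 e2 N := by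
  rcases Nat.even_or_odd' N with ⟨m, rfl | rfl⟩
  · rcases m with _ | m
    · simp [xiPartialSum]
    · have hF := eq_of_nDomLE_of_sum_range_eq hf' hfle (n := 2 * m + 1) hfN
      have hG := eq_of_nDomLE_of_sum_range_eq hg' hgle (n := 2 * m + 1) hgN
      simp only [xiPartialSum, show 2 * (m + 1) = 2 * m + 1 + 1 by omega, Nat.add_sub_cancel,
        Nat.add_one_ne_zero, ↓reduceIte]
      split_ifs <;> omega
  · have := pf.mod_two_eq_of_sum_range_eq pf' hfN
    have := pg.mod_two_eq_of_sum_range_eq pg' hgN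
    simp only [xiPartialSum, Nat.add_sub_cancel]
    split_ifs <;> omega

theorem domLE_wald {f g f' g' : ℕ → ℕ} (hf : Antitone f) (hg : Antitone g) (hf' : Antitone f')
    (hg' : Antitone g') (pf : ParityPaired f) (pg : ParityPaired g) (pf' : ParityPaired f')
    (pg' : ParityPaired g') (hfle : NDomLE f f') (hgle : NDomLE g g') {e1 e2 d : ℕ}
    (hd : Even d) : DomLE (wald f g e1 e2 d) (wald f' g' e1 e2 d) := by
  intro N
  rw [sum_range_wald hf hg pf pg hd, sum_range_wald hf' hg' pf' pg' hd]
  have hF := hfle N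
  have hG := hgle N
  obtain hlt | ⟨hfN, hgN⟩ :
      ∑ j ∈ range N, f j + ∑ j ∈ range N, g j < ∑ j ∈ range N, f' j + ∑ j ∈ range N, g' j ∨
      (∑ j ∈ range N, f j = ∑ j ∈ range N, f' j ∧ ∑ j ∈ range N, g j = ∑ j ∈ range N, g' j) := by
    omega
  · have := xiPartialSum_le_one f g e1 e2 N
    have := xiPartialSum_nonneg f' g' e1 e2 N
    omega
  · have := xiPartialSum_le_of_sum_range_eq hf' hg' pf pg pf' pg' hfle hgle e1 e2 hfN hgN
    omega

theorem stmt7_general (d1 d2 : ℕ) (hd1 : Even d1) (hd2 : Even d2)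
    (lam1 lam1' lam2 lam2' : ℕ → ℕ)
    (h1 : IsPartitionOf lam1 d1)
    (h1s : IsSymplectic (ptrans lam1))
    (h1' : IsPartitionOf lam1' d1)
    (h1s' : IsSymplectic (ptrans lam1'))
    (h2 : IsPartitionOf lam2 d2)
    (h2s : IsSymplectic (ptrans lam2))
    (h2' : IsPartitionOf lam2' d2)
    (h2s' : IsSymplectic (ptrans lam2'))
    (hle1 : NDomLE lam1 lam1') (hle2 : NDomLE lam2 lam2') :
    DomLE (wald lam1 lam2 0 1 (d1+d2)) (wald lam1' lam2' 0 1 (d1+d2)) :=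
  domLE_wald h1.1 h2.1 h1'.1 h2'.1 (h1.parityPaired h1s) (h2.parityPaired h2s)
    (h1'.parityPaired h1s') (h2'.parityPaired h2s') hle1 hle2 (hd1.add hd2)

/-- type C monotonicity.  `d₁, d₂` even, `d = d₁+d₂`; `λ₁ ≤ λ₁'` special
symplectic partitions of `d₁` and `λ₂ ≤ λ₂'` special orthogonal partitions of `d₂` imply
`W(λ₁,λ₂) ≤ W(λ₁',λ₂')` (ε₁=0, ε₂=1). -/
theorem stmt7 (d1 d2 : ℕ) (hd1 : Even d1) (hd2 : Even d2)
    (lam1 lam1' lam2 lam2' : ℕ → ℕ)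
    (h1 : IsPartitionOf lam1 d1) (h1sp : IsSymplectic lam1)
    (h1s : IsSymplectic (ptrans lam1))
    (h1' : IsPartitionOf lam1' d1) (h1sp' : IsSymplectic lam1')
    (h1s' : IsSymplectic (ptrans lam1'))
    (h2 : IsPartitionOf lam2 d2) (h2o : IsOrthogonal lam2)
    (h2s : IsSymplectic (ptrans lam2))
    (h2' : IsPartitionOf lam2' d2) (h2o' : IsOrthogonal lam2')
    (h2s' : IsSymplectic (ptrans lam2'))
    (hle1 : NDomLE lam1 lam1') (hle2 : NDomLE lam2 lam2') :
    DomLE (wald lam1 lam2 0 1 (d1+d2)) (wald lam1' lam2' 0 1 (d1+d2)) :=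
  stmt7_general d1 d2 hd1 hd2 lam1 lam1' lam2 lam2' h1 h1s h1' h1s' h2 h2s h2' h2s' hle1 hle2
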